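/- The Jensen bound dominates the spectral bound with all eigenvalues: Let C ⊆ F_q^{mℓ} be a nonzero λ-QT code with nonempty eigenvalue set Ω̄ ⊆ Ω. Let D_{Ω̄} ⊆ F^m be the λ-constacyclic code over F with zero set Ω̄, and let ℂ_{Ω̄} be the eigencode of ∩_{β∈Ω̄} V_β. Let i_1,…,i_t be the indices with nonzero constituent C_{i_j}, ordered so that d(C_{i_1}) ≤ ⋯ ≤ d(C_{i_t}), and for each r let Θ_r be the λ-constacyclic code over F_q with generator polynomial (x^m−λ)/(f_{i_1}⋯f_{i_r}). Then the Jensen estimate d_J = min over 1 ≤ r ≤ t of d(C_{i_r})·d(Θ_r) satisfies d(C) ≥ d_J ≥ min{ d(D_{Ω̄}), d(ℂ_{Ω̄}) }. -/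

import Mathlib

open Polynomial

open scoped Classical in
/-- Hamming weight: the number of nonzero coordinates. -/
noncomputable def wt {ι K : Type*} [Fintype ι] [Zero K] (c : ι → K) : ℕ :=
  (Finset.univ.filter fun i => c i ≠ 0).card

/-- Minimum Hamming weight of a nonzero codeword of `S`, with `⊤` for the zero code. -/
noncomputable def minDist {ι K : Type*} [Fintype ι] [Zero K] (S : Set (ι → K)) : ℕ∞ :=
  sInf {n : ℕ∞ | ∃ c ∈ S, c ≠ 0 ∧ (wt c : ℕ∞) = n}

/-- The λ-constashift by ℓ positions on m×ℓ arrays: row 0 becomes λ times old last row. -/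
def rho {Fq : Type*} [Field Fq] (m ℓ : ℕ) [NeZero m] (lam : Fq)
    (c : ZMod m × Fin ℓ → Fq) : ZMod m × Fin ℓ → Fq :=
  fun p => (if p.1 = 0 then lam else 1) * c (p.1 - 1, p.2)

/-- Reduction of a vector of polynomials mod `X^m - λ`, written as an m×ℓ array. -/
noncomputable def arrOf {Fq : Type*} [Field Fq] (m ℓ : ℕ) [NeZero m] (lam : Fq)
    (v : Fin ℓ → Polynomial Fq) : ZMod m × Fin ℓ → Fq :=
  fun p => ((v p.2) %ₘ (Polynomial.X ^ m - Polynomial.C lam)).coeff (p.1).val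

/-- The λ-constacyclic code of length `m` over `F` with zero set `P`. -/
def Dcode {F : Type*} [Field F] (m : ℕ) (P : Set F) : Set (Fin m → F) :=
  {c | ∀ β ∈ P, ∑ k : Fin m, c k * β ^ (k : ℕ) = 0}

/-- The eigenspace of `β` for the polynomial matrix `G`: the null space of `G(β)`. -/
def Vspace {Fq F : Type*} [Field Fq] [Field F] [Algebra Fq F] (ℓ : ℕ)
    (G : Matrix (Fin ℓ) (Fin ℓ) (Polynomial Fq)) (β : F) : Set (Fin ℓ → F) :=
  {v | (G.map fun p => Polynomial.aeval β p).mulVec v = 0}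

/-- The eigencode of a set of vectors `V ⊆ F^ℓ`. -/
def eigencode {Fq F : Type*} [Field Fq] [Field F] [Algebra Fq F] (ℓ : ℕ)
    (V : Set (Fin ℓ → F)) : Set (Fin ℓ → Fq) :=
  {u | ∀ v ∈ V, ∑ j, v j * algebraMap Fq F (u j) = 0}

/-! For a nonzero codeword `c`, let `r` be the last index with `c(β_{σ r}) ≠ 0`. Every column of
`c` vanishes at the `β_i` with `i ∉ σ({0, …, r})`, hence lies in `Θ_r`, and every nonzero entry
of `c(β_{σ r})` comes from a nonzero column; so `wt c ≥ d(C_{σ r}) · d(Θ_r)`.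

For the lower bound fix `r`. If no eigenvalue is a root of `f_{σ 0} ⋯ f_{σ r}`, every eigenvalue
is a root of the generator of `Θ_r`, so `Θ_r ⊆ D_Ω̄`. Otherwise some eigenvalue is a conjugate of
`β_{σ j}` with `j ≤ r`; eigenvalues are closed under conjugation, and for a nonzero
`w ∈ C_{σ j}` a suitable `γ` makes `(Tr(γ w_k))_k` a nonzero word of the eigencode with support
inside that of `w`, because `Tr(γ w_k) = ∑_τ τ(γ) τ(w_k)` and `τ(w) = c(τ β_{σ j})` is orthogonal
to `V_{τ β_{σ j}}`. Monotonicity of `d(C_{σ r})` in `r` finishes the argument.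
-/

open Finset

section Weight

variable {ι K L : Type*} [Fintype ι] [Zero K] [Zero L]

theorem wt_eq_zero_iff {c : ι → K} : wt c = 0 ↔ c = 0 := by
  simp [wt, Finset.filter_eq_empty_iff, funext_iff]

theorem wt_le_wt {c : ι → K} {d : ι → L} (h : ∀ i, c i ≠ 0 → d i ≠ 0) : wt c ≤ wt d :=
  Finset.card_le_card fun i => by simpa using h i

theorem minDist_le_wt {S : Set (ι → K)} {c : ι → K} (hc : c ∈ S) (h0 : c ≠ 0) :
    minDist S ≤ wt c :=
  sInf_le ⟨c, hc, h0, rfl⟩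

theorem le_minDist {S : Set (ι → K)} {a : ℕ∞} (h : ∀ c ∈ S, c ≠ 0 → a ≤ wt c) :
    a ≤ minDist S :=
  le_sInf <| by rintro n ⟨c, hc, h0, rfl⟩; exact h c hc h0

theorem one_le_minDist (S : Set (ι → K)) : 1 ≤ minDist S :=
  le_minDist fun _ _ h0 => by
    exact_mod_cast Nat.one_le_iff_ne_zero.mpr (mt wt_eq_zero_iff.mp h0)

theorem minDist_le_minDist {S : Set (ι → K)} {T : Set (ι → L)}
    (h : ∀ c ∈ T, c ≠ 0 → ∃ d ∈ S, d ≠ 0 ∧ ∀ i, d i ≠ 0 → c i ≠ 0) :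
    minDist S ≤ minDist T :=
  le_minDist fun c hc h0 => by
    obtain ⟨d, hd, hd0, hsupp⟩ := h c hc h0
    exact (minDist_le_wt hd hd0).trans (by exact_mod_cast wt_le_wt hsupp)

theorem wt_mul_minDist_le_sum_wt {κ : Type*} [Fintype κ] {S : Set (ι → K)}
    (col : κ → ι → K) (w : κ → L) (hS : ∀ j, col j ∈ S) (hw : ∀ j, w j ≠ 0 → col j ≠ 0) :
    (wt w : ℕ∞) * minDist S ≤ ∑ j, (wt (col j) : ℕ∞) := by
  classical
  set N := Finset.univ.filter fun j => w j ≠ 0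
  calc (wt w : ℕ∞) * minDist S = N.card • minDist S := by
        rw [nsmul_eq_mul]; rfl
    _ ≤ ∑ j ∈ N, (wt (col j) : ℕ∞) :=
        Finset.card_nsmul_le_sum _ _ _ fun j hj =>
          minDist_le_wt (hS j) (hw j (Finset.mem_filter.mp hj).2)
    _ ≤ ∑ j, (wt (col j) : ℕ∞) := Finset.sum_le_sum_of_subset N.subset_univ

end Weight

section ToPoly

variable {K : Type*} [CommSemiring K] {m : ℕ}

noncomputable def toPoly (v : Fin m → K) : K[X] :=
  ∑ k, C (v k) * X ^ (k : ℕ)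

theorem coeff_toPoly (v : Fin m → K) (k : Fin m) : (toPoly v).coeff k = v k := by
  simp [toPoly, coeff_C_mul, coeff_X_pow, Fin.val_inj]

theorem degree_toPoly_lt (v : Fin m → K) : (toPoly v).degree < m :=
  (degree_sum_le _ _).trans_lt <| (Finset.sup_lt_iff (WithBot.bot_lt_coe m)).mpr fun k _ =>
    (degree_C_mul_X_pow_le _ _).trans_lt (WithBot.coe_lt_coe.mpr k.isLt)

theorem aeval_toPoly {L : Type*} [CommSemiring L] [Algebra K L] (v : Fin m → K) (β : L) :
    aeval β (toPoly v) = ∑ k, algebraMap K L (v k) * β ^ (k : ℕ) := by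
  simp [toPoly]

end ToPoly

section Array

variable {K : Type*} {m ℓ : ℕ} [NeZero m]

def col (c : ZMod m × Fin ℓ → K) (j : Fin ℓ) : Fin m → K :=
  fun k => c (ZMod.finEquiv m k, j)

theorem ZMod.val_finEquiv (k : Fin m) : (ZMod.finEquiv m k).val = k := by
  obtain ⟨n, rfl⟩ := Nat.exists_eq_succ_of_ne_zero (NeZero.ne m)
  rfl

theorem wt_eq_sum_wt_col [Zero K] (c : ZMod m × Fin ℓ → K) : wt c = ∑ j, wt (col c j) := by
  classical
  simp only [wt, Finset.card_filter, Fintype.sum_prod_type]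
  rw [Finset.sum_comm]
  refine Finset.sum_congr rfl fun j _ => ?_
  exact ((ZMod.finEquiv m).toEquiv.sum_comp fun k => if c (k, j) ≠ 0 then 1 else 0).symm

theorem coeff_toPoly_col [CommSemiring K] (c : ZMod m × Fin ℓ → K) (j : Fin ℓ) (k : ZMod m) :
    (toPoly (col c j)).coeff k.val = c (k, j) := by
  obtain ⟨k, rfl⟩ := (ZMod.finEquiv m).surjective k
  rw [ZMod.val_finEquiv, coeff_toPoly]
  rfl

theorem arrOf_toPoly_col [Field K] (lam : K) (c : ZMod m × Fin ℓ → K) :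
    arrOf m ℓ lam (fun j => toPoly (col c j)) = c := by
  funext p
  have hlt : (toPoly (col c p.2)).degree < (X ^ m - C lam).degree := by
    rw [degree_X_pow_sub_C (Nat.pos_of_neZero m)]
    exact degree_toPoly_lt _
  rw [arrOf, (modByMonic_eq_self_iff (monic_X_pow_sub_C lam (NeZero.ne m))).mpr hlt,
    coeff_toPoly_col]

theorem aeval_toPoly_col [CommSemiring K] {L : Type*} [CommSemiring L] [Algebra K L] (β : L)
    (c : ZMod m × Fin ℓ → K) (j : Fin ℓ) :
    aeval β (toPoly (col c j)) = ∑ k : ZMod m, algebraMap K L (c (k, j)) * β ^ k.val := by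
  rw [aeval_toPoly, ← (ZMod.finEquiv m).toEquiv.sum_comp]
  simp [col, ZMod.val_finEquiv]

end Array

theorem prod_dvd_of_forall_aeval_eq_zero {K L ι : Type*} [Field K] [CommRing L] [IsDomain L]
    [Algebra K L] {f : ι → K[X]} {β : ι → L} (hmon : ∀ i, (f i).Monic)
    (hirr : ∀ i, Irreducible (f i)) (hinj : Function.Injective f)
    (hβ : ∀ i, aeval (β i) (f i) = 0) (T : Finset ι) {p : K[X]}
    (hp : ∀ i ∈ T, aeval (β i) p = 0) : ∏ i ∈ T, f i ∣ p := by
  refine Finset.prod_dvd_of_coprime (fun i _ i' _ hne => ?_) fun i hi =>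
    ((hirr i).dvd_iff_aeval_eq_zero (hβ i)).mp (hp i hi)
  refine (hirr i).coprime_iff_not_dvd.mpr fun hdvd => hne (hinj ?_)
  exact eq_of_monic_of_associated (hmon i) (hmon i') ((hirr i).associated_of_dvd (hirr i') hdvd)

section Trace

variable {K L : Type*} [Field K] [Field L] [Algebra K L] [FiniteDimensional K L]

theorem exists_trace_mul_ne_zero [Algebra.IsSeparable K L] {ι : Type*} {w : ι → L} (hw : w ≠ 0) :
    ∃ γ : L, (fun j => Algebra.trace K L (γ * w j)) ≠ 0 := by
  obtain ⟨j, hj⟩ := Function.ne_iff.mp hw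
  obtain ⟨γ, hγ⟩ : ∃ γ, Algebra.traceForm K L γ (w j) ≠ 0 := by
    by_contra! h
    exact hj ((traceForm_nondegenerate K L).2 _ h)
  exact ⟨γ, Function.ne_iff.mpr ⟨j, hγ⟩⟩

theorem minDist_eigencode_le [IsGalois K L] {ℓ : ℕ} (V W : Set (Fin ℓ → L))
    (h : ∀ w ∈ W, ∀ τ : L ≃ₐ[K] L, ∀ v ∈ V, ∑ j, τ (w j) * v j = 0) :
    minDist (eigencode (Fq := K) ℓ V) ≤ minDist W := by
  refine minDist_le_minDist fun w hw hw0 => ?_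
  obtain ⟨γ, hγ⟩ := exists_trace_mul_ne_zero (K := K) hw0
  refine ⟨_, fun v hv => ?_, hγ, fun j hj hwj => hj (by simp [hwj])⟩
  calc ∑ j, v j * algebraMap K L (Algebra.trace K L (γ * w j))
      = ∑ τ : L ≃ₐ[K] L, τ γ * ∑ j, τ (w j) * v j := by
        simp only [trace_eq_sum_automorphisms, map_mul, Finset.mul_sum]
        rw [Finset.sum_comm]
        exact Finset.sum_congr rfl fun _ _ => Finset.sum_congr rfl fun _ _ => by ring
    _ = 0 := Finset.sum_eq_zero fun τ _ => by rw [h w hw τ v hv, mul_zero]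

end Trace

theorem prod_div_prod_image {ι κ R : Type*} [Fintype ι] [DecidableEq ι] [EuclideanDomain R]
    {f : ι → R} (hf : ∀ i, f i ≠ 0) {σ : κ → ι} (hσ : Function.Injective σ) (S : Finset κ) :
    (∏ i, f i) / ∏ j ∈ S, f (σ j) = ∏ i ∈ univ \ S.image σ, f i := by
  rw [← prod_image fun _ _ _ _ h => hσ h, ← prod_sdiff (subset_univ _),
    mul_div_cancel_right₀ _ (prod_ne_zero_iff.mpr fun i _ => hf i)]

theorem exists_apply_and_forall_mem_image_Iic {s t : ℕ} {σ : Fin t → Fin s} {p : Fin s → Prop}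
    (hcover : ∀ i, p i → ∃ r, σ r = i) (hex : ∃ i, p i) :
    ∃ r, p (σ r) ∧ ∀ i, p i → i ∈ (Iic r).image σ := by
  classical
  set A := univ.filter fun r => p (σ r)
  obtain ⟨i, hi⟩ := hex
  obtain ⟨r₀, rfl⟩ := hcover i hi
  have hA : A.Nonempty := ⟨r₀, by simpa [A] using hi⟩
  refine ⟨A.max' hA, (mem_filter.mp (A.max'_mem hA)).2, fun i hi => ?_⟩
  obtain ⟨r, rfl⟩ := hcover i hi
  exact mem_image_of_mem σ (mem_Iic.mpr (A.le_max' r (by simpa [A] using hi)))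

theorem IsConjRoot.aeval_eq_zero_iff {K L : Type*} [Field K] [Ring L] [Algebra K L] {x y : L}
    (h : IsConjRoot K x y) {p : K[X]} : aeval x p = 0 ↔ aeval y p = 0 := by
  rw [← minpoly.dvd_iff, ← minpoly.dvd_iff, h]

section QuasiTwisted

variable {Fq F : Type*} [Field Fq] [Field F] [Algebra Fq F] {m ℓ : ℕ}

theorem minDist_Dcode_le_of_dvd {P : Set F} (g : Fq[X]) (hg : ∀ β ∈ P, aeval β g = 0) :
    minDist (Dcode m P) ≤ minDist {v : Fin m → Fq | g ∣ toPoly v} := by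
  refine minDist_le_minDist fun v hv hv0 => ⟨fun k => algebraMap Fq F (v k), fun β hβ => ?_,
    fun h => hv0 (funext fun k => by simpa using congrFun h k), fun k hk h => hk (by simp [h])⟩
  rw [← aeval_toPoly]
  exact aeval_eq_zero_of_dvd_aeval_eq_zero hv (hg β hβ)

theorem sum_aeval_mul_eq_zero_of_mem_span {G : Matrix (Fin ℓ) (Fin ℓ) Fq[X]} {p : Fin ℓ → Fq[X]}
    (hp : p ∈ Submodule.span Fq[X] (Set.range fun i j => G i j)) {β : F} {v : Fin ℓ → F}
    (hv : v ∈ Vspace ℓ G β) : ∑ j, aeval β (p j) * v j = 0 := by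
  obtain ⟨a, rfl⟩ := (Submodule.mem_span_range_iff_exists_fun _).mp hp
  calc ∑ j, aeval β ((∑ i, a i • fun j => G i j) j) * v j
      = ∑ i, aeval β (a i) * (G.map fun p => aeval β p).mulVec v i := by
        simp only [Finset.sum_apply, Pi.smul_apply, smul_eq_mul, map_sum, map_mul, Finset.sum_mul,
          Matrix.mulVec, dotProduct, Matrix.map_apply, Finset.mul_sum]
        rw [Finset.sum_comm]
        exact Finset.sum_congr rfl fun _ _ => Finset.sum_congr rfl fun _ _ => by ring
    _ = 0 := by rw [hv]; simp

variable (F m) in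
/-- The eigenvalue set `Ω̄` of the code generated by the rows of `G`. -/
def eigenvalues (lam : Fq) (G : Matrix (Fin ℓ) (Fin ℓ) Fq[X]) : Set F :=
  {x | x ^ m = algebraMap Fq F lam ∧ aeval x G.det = 0}

theorem IsConjRoot.mem_eigenvalues {lam : Fq} {G : Matrix (Fin ℓ) (Fin ℓ) Fq[X]} {x y : F}
    (h : IsConjRoot Fq x y) (hx : x ∈ eigenvalues F m lam G) : y ∈ eigenvalues F m lam G := by
  have hpow : aeval y (X ^ m - C lam) = 0 := h.aeval_eq_zero_iff.mp (by simp [hx.1])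
  exact ⟨by simpa [sub_eq_zero] using hpow, h.aeval_eq_zero_iff.mp hx.2⟩

end QuasiTwisted

section Jensen

variable {Fq F : Type*} [Field Fq] [Field F] [Algebra Fq F] {m ℓ s t : ℕ} [NeZero m] {lam : Fq}
  {f : Fin s → Fq[X]} {βc : Fin s → F} {σ : Fin t → Fin s}

/-- `c(β)` in the notation of the paper. -/
noncomputable def evalArray (β : F) (c : ZMod m × Fin ℓ → Fq) (j : Fin ℓ) : F :=
  aeval β (toPoly (col c j))

variable (m) in
/-- `Θ_r`, generated by `(x^m - λ) / (f_{σ 0} ⋯ f_{σ r}) = ∏_{i ∉ σ({0, …, r})} f_i`. -/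
def thetaCode (f : Fin s → Fq[X]) (σ : Fin t → Fin s) (r : Fin t) : Set (Fin m → Fq) :=
  {v | ∏ i ∈ univ \ (Iic r).image σ, f i ∣ toPoly v}

theorem exists_evalArray_ne_zero (hmon : ∀ i, (f i).Monic) (hirr : ∀ i, Irreducible (f i))
    (hfinj : Function.Injective f) (hprod : ∏ i, f i = X ^ m - C lam)
    (hβc : ∀ i, aeval (βc i) (f i) = 0) {c : ZMod m × Fin ℓ → Fq} (hc : c ≠ 0) :
    ∃ i, evalArray (βc i) c ≠ 0 := by
  by_contra! h
  refine hc (funext fun ⟨k, j⟩ => ?_)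
  have hdvd : ∏ i, f i ∣ toPoly (col c j) :=
    prod_dvd_of_forall_aeval_eq_zero hmon hirr hfinj hβc univ fun i _ => congrFun (h i) j
  have hzero : toPoly (col c j) = 0 := by
    refine eq_zero_of_dvd_of_degree_lt hdvd ?_
    rw [hprod, degree_X_pow_sub_C (Nat.pos_of_neZero m)]
    exact degree_toPoly_lt _
  rw [← coeff_toPoly_col c j k, hzero, coeff_zero, Pi.zero_apply]

theorem iInf_mul_minDist_thetaCode_le_minDist (hmon : ∀ i, (f i).Monic)
    (hirr : ∀ i, Irreducible (f i)) (hfinj : Function.Injective f)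
    (hprod : ∏ i, f i = X ^ m - C lam) (hβc : ∀ i, aeval (βc i) (f i) = 0)
    (𝓒 : Set (ZMod m × Fin ℓ → Fq))
    (hcover : ∀ i, (∃ w ∈ evalArray (βc i) '' 𝓒, w ≠ 0) → ∃ r, σ r = i) :
    ⨅ r, minDist (evalArray (βc (σ r)) '' 𝓒) * minDist (thetaCode m f σ r) ≤ minDist 𝓒 := by
  refine le_minDist fun c hc hc0 => ?_
  obtain ⟨r, hr, hsupp⟩ := exists_apply_and_forall_mem_image_Iic
    (p := fun i => evalArray (βc i) c ≠ 0) (fun i hi => hcover i ⟨_, ⟨c, hc, rfl⟩, hi⟩)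
    (exists_evalArray_ne_zero hmon hirr hfinj hprod hβc hc0)
  have hcol : ∀ j, col c j ∈ thetaCode m f σ r := fun j =>
    prod_dvd_of_forall_aeval_eq_zero hmon hirr hfinj hβc _ fun i hi => by_contra fun hne =>
      (mem_sdiff.mp hi).2 (hsupp i fun h => hne (congrFun h j))
  calc ⨅ r, minDist (evalArray (βc (σ r)) '' 𝓒) * minDist (thetaCode m f σ r)
      ≤ minDist (evalArray (βc (σ r)) '' 𝓒) * minDist (thetaCode m f σ r) := iInf_le _ r
    _ ≤ wt (evalArray (βc (σ r)) c) * minDist (thetaCode m f σ r) :=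
        mul_le_mul_left (minDist_le_wt (Set.mem_image_of_mem _ hc) hr) _
    _ ≤ ∑ j, (wt (col c j) : ℕ∞) :=
        wt_mul_minDist_le_sum_wt _ _ hcol fun j hj h0 => hj (by simp [evalArray, h0, toPoly])
    _ = wt c := by rw [wt_eq_sum_wt_col]; push_cast; rfl

theorem minDist_eigencode_le_minDist_evalArray [FiniteDimensional Fq F] [IsGalois Fq F]
    {G : Matrix (Fin ℓ) (Fin ℓ) Fq[X]} {𝓒 : Set (ZMod m × Fin ℓ → Fq)}
    (hspan : ∀ c ∈ 𝓒,
      (fun j => toPoly (col c j)) ∈ Submodule.span Fq[X] (Set.range fun i j => G i j))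
    {β : F} (hβ : β ∈ eigenvalues F m lam G) :
    minDist (eigencode (Fq := Fq) ℓ (⋂ β ∈ eigenvalues F m lam G, Vspace ℓ G β))
      ≤ minDist (evalArray β '' 𝓒) := by
  refine minDist_eigencode_le _ _ ?_
  rintro _ ⟨c, hc, rfl⟩ τ v hv
  have hτβ : τ β ∈ eigenvalues F m lam G := (isConjRoot_of_algEquiv β τ).mem_eigenvalues hβ
  simp only [evalArray, ← aeval_algHom_apply]
  exact sum_aeval_mul_eq_zero_of_mem_span (hspan c hc) (Set.mem_iInter₂.mp hv _ hτβ)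

theorem min_minDist_le_mul_minDist_thetaCode [FiniteDimensional Fq F] [IsGalois Fq F]
    (hmon : ∀ i, (f i).Monic) (hirr : ∀ i, Irreducible (f i))
    (hprod : ∏ i, f i = X ^ m - C lam) (hβc : ∀ i, aeval (βc i) (f i) = 0)
    {G : Matrix (Fin ℓ) (Fin ℓ) Fq[X]} {𝓒 : Set (ZMod m × Fin ℓ → Fq)}
    (hspan : ∀ c ∈ 𝓒,
      (fun j => toPoly (col c j)) ∈ Submodule.span Fq[X] (Set.range fun i j => G i j))
    (hmono : Monotone fun r => minDist (evalArray (βc (σ r)) '' 𝓒)) (r : Fin t) :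
    min (minDist (Dcode m (eigenvalues F m lam G)))
        (minDist (eigencode (Fq := Fq) ℓ (⋂ β ∈ eigenvalues F m lam G, Vspace ℓ G β)))
      ≤ minDist (evalArray (βc (σ r)) '' 𝓒) * minDist (thetaCode m f σ r) := by
  by_cases h : ∃ β ∈ eigenvalues F m lam G, ∃ i ∈ (Iic r).image σ, aeval β (f i) = 0
  · obtain ⟨β, hβ, _, hi, hβf⟩ := h
    obtain ⟨j, hj, rfl⟩ := mem_image.mp hi
    have hconj : IsConjRoot Fq β (βc (σ j)) :=
      (minpoly.eq_of_irreducible_of_monic (hirr _) hβf (hmon _)).symm.trans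
        (minpoly.eq_of_irreducible_of_monic (hirr _) (hβc _) (hmon _))
    calc _ ≤ minDist (eigencode (Fq := Fq) ℓ (⋂ β ∈ eigenvalues F m lam G, Vspace ℓ G β)) :=
          min_le_right _ _
      _ ≤ minDist (evalArray (βc (σ j)) '' 𝓒) :=
          minDist_eigencode_le_minDist_evalArray hspan (hconj.mem_eigenvalues hβ)
      _ ≤ minDist (evalArray (βc (σ r)) '' 𝓒) := hmono (mem_Iic.mp hj)
      _ ≤ _ := le_mul_of_one_le_right' (one_le_minDist _)
  · push Not at h
    have hroot : ∀ β ∈ eigenvalues F m lam G, aeval β (∏ i ∈ univ \ (Iic r).image σ, f i) = 0 := by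
      intro β hβ
      have hall : aeval β (∏ i, f i) = 0 := by simp [hprod, hβ.1]
      rw [map_prod, prod_eq_zero_iff] at hall ⊢
      obtain ⟨i, -, hi⟩ := hall
      exact ⟨i, mem_sdiff.mpr ⟨mem_univ i, fun hmem => h β hβ i hmem hi⟩, hi⟩
    calc _ ≤ minDist (Dcode m (eigenvalues F m lam G)) := min_le_left _ _
      _ ≤ minDist (thetaCode m f σ r) := minDist_Dcode_le_of_dvd _ hroot
      _ ≤ _ := le_mul_of_one_le_left' (one_le_minDist _)

end Jensen

theorem jensen_dominates_spectral_general
    {Fq F : Type*} [Field Fq] [Fintype Fq] [Field F] [Algebra Fq F]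
    (m ℓ : ℕ) [NeZero m]
    (lam : Fq)
    (hsplit : IsSplittingField Fq F (X ^ m - C lam))
    (𝓒 : Submodule Fq (ZMod m × Fin ℓ → Fq))
    (G : Matrix (Fin ℓ) (Fin ℓ) (Polynomial Fq))
    (hGen : ∀ v : Fin ℓ → Polynomial Fq,
      arrOf m ℓ lam v ∈ 𝓒 ↔ v ∈ Submodule.span (Polynomial Fq) (Set.range fun i j => G i j))
    (Ωbar : Set F)
    (hΩbar : Ωbar = {x : F | x ^ m = algebraMap Fq F lam ∧ Polynomial.aeval x G.det = 0})
    (s : ℕ) (f : Fin s → Polynomial Fq)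
    (hmon : ∀ i, (f i).Monic) (hirr : ∀ i, Irreducible (f i))
    (hfinj : Function.Injective f)
    (hprod : ∏ i, f i = X ^ m - C lam)
    (βc : Fin s → F) (hβc : ∀ i, Polynomial.aeval (βc i) (f i) = 0)
    (Const : Fin s → Set (Fin ℓ → F))
    (hConst : ∀ i, Const i =
      {w | ∃ c ∈ 𝓒, w = fun j => ∑ k : ZMod m, algebraMap Fq F (c (k, j)) * βc i ^ k.val})
    (t : ℕ) (σ : Fin t → Fin s) (hσinj : Function.Injective σ)
    (hcover : ∀ i, (∃ w ∈ Const i, w ≠ 0) → ∃ r, σ r = i)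
    (hmono : Monotone fun r => minDist (Const (σ r)))
    (Θ : Fin t → Set (Fin m → Fq))
    (hΘ : ∀ r, Θ r = {c | ((X ^ m - C lam) / ∏ j ∈ Finset.Iic r, f (σ j)) ∣
        ∑ k : Fin m, Polynomial.C (c k) * X ^ (k : ℕ)})
    (dJ : ℕ∞) (hdJ : dJ = ⨅ r, minDist (Const (σ r)) * minDist (Θ r)) :
    dJ ≤ minDist (𝓒 : Set (ZMod m × Fin ℓ → Fq)) ∧
    min (minDist (Dcode (F := F) m Ωbar))
        (minDist (eigencode (Fq := Fq) ℓ (⋂ β ∈ Ωbar, Vspace ℓ G β))) ≤ dJ := by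
  have := hsplit
  have : FiniteDimensional Fq F := IsSplittingField.finiteDimensional F (X ^ m - C lam)
  have : Normal Fq F := Normal.of_isSplittingField (X ^ m - C lam)
  have : IsGalois Fq F := ⟨⟩
  have hConst' : ∀ i, Const i = evalArray (βc i) '' (𝓒 : Set (ZMod m × Fin ℓ → Fq)) := fun i => by
    ext w
    simp only [hConst, Set.mem_ofPred_eq, Set.mem_image, SetLike.mem_coe, funext_iff, evalArray,
      aeval_toPoly_col, eq_comm]
  have hΘ' : ∀ r, Θ r = thetaCode m f σ r := fun r => by
    rw [hΘ, ← hprod, prod_div_prod_image (fun i => (hmon i).ne_zero) hσinj]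
    rfl
  have hspan : ∀ c ∈ 𝓒, (fun j => toPoly (col c j)) ∈
      Submodule.span Fq[X] (Set.range fun i j => G i j) :=
    fun c hc => (hGen _).mp (by rwa [arrOf_toPoly_col])
  simp only [hConst', hΘ'] at hcover hmono hdJ
  subst hdJ hΩbar
  exact ⟨iInf_mul_minDist_thetaCode_le_minDist hmon hirr hfinj hprod hβc _ hcover,
    le_iInf (min_minDist_le_mul_minDist_thetaCode hmon hirr hprod hβc hspan hmono)⟩

theorem jensen_dominates_spectral
    {Fq F : Type*} [Field Fq] [Fintype Fq] [Field F] [Algebra Fq F]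
    (m ℓ : ℕ) [NeZero m] (hcop : Nat.Coprime m (Fintype.card Fq))
    (lam : Fq) (hlam : lam ≠ 0)
    (hsplit : IsSplittingField Fq F (X ^ m - C lam))
    (𝓒 : Submodule Fq (ZMod m × Fin ℓ → Fq))
    (hQT : ∀ c ∈ 𝓒, rho m ℓ lam c ∈ 𝓒)
    (G : Matrix (Fin ℓ) (Fin ℓ) (Polynomial Fq))
    (htri : ∀ i j, j < i → G i j = 0)
    (hdiv : ∀ j, G j j ∣ X ^ m - C lam)
    (hGen : ∀ v : Fin ℓ → Polynomial Fq,
      arrOf m ℓ lam v ∈ 𝓒 ↔ v ∈ Submodule.span (Polynomial Fq) (Set.range fun i j => G i j))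
    (h0 : 𝓒 ≠ ⊥)
    (Ωbar : Set F)
    (hΩbar : Ωbar = {x : F | x ^ m = algebraMap Fq F lam ∧ Polynomial.aeval x G.det = 0})
    (hne : Ωbar.Nonempty)
    (s : ℕ) (f : Fin s → Polynomial Fq)
    (hmon : ∀ i, (f i).Monic) (hirr : ∀ i, Irreducible (f i))
    (hfinj : Function.Injective f)
    (hprod : ∏ i, f i = X ^ m - C lam)
    (βc : Fin s → F) (hβc : ∀ i, Polynomial.aeval (βc i) (f i) = 0)
    (Const : Fin s → Set (Fin ℓ → F))
    (hConst : ∀ i, Const i =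
      {w | ∃ c ∈ 𝓒, w = fun j => ∑ k : ZMod m, algebraMap Fq F (c (k, j)) * βc i ^ k.val})
    (t : ℕ) (σ : Fin t → Fin s) (hσinj : Function.Injective σ)
    (hnz : ∀ r, ∃ w ∈ Const (σ r), w ≠ 0)
    (hcover : ∀ i, (∃ w ∈ Const i, w ≠ 0) → ∃ r, σ r = i)
    (hmono : Monotone fun r => minDist (Const (σ r)))
    (Θ : Fin t → Set (Fin m → Fq))
    (hΘ : ∀ r, Θ r = {c | ((X ^ m - C lam) / ∏ j ∈ Finset.Iic r, f (σ j)) ∣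
        ∑ k : Fin m, Polynomial.C (c k) * X ^ (k : ℕ)})
    (dJ : ℕ∞) (hdJ : dJ = ⨅ r, minDist (Const (σ r)) * minDist (Θ r)) :
    dJ ≤ minDist (𝓒 : Set (ZMod m × Fin ℓ → Fq)) ∧
    min (minDist (Dcode (F := F) m Ωbar))
        (minDist (eigencode (Fq := Fq) ℓ (⋂ β ∈ Ωbar, Vspace ℓ G β))) ≤ dJ :=
  jensen_dominates_spectral_general m ℓ lam hsplit 𝓒 G hGen Ωbar hΩbar s f hmon hirr hfinj hprod βc
    hβc Const hConst t σ hσinj hcover hmono Θ hΘ dJ hdJ
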